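/- arXiv:2306.14290 — 11 statements merged into one kernel-verified Lean document; each statement's English description precedes it below -/
import Mathlib

section
/- Let H be an n×n real symmetric matrix, g ∈ ℝⁿ, f₀ ∈ ℝ and σ > 0, and let m(s) = f₀ + gᵀs + (1/2)sᵀHs + (σ/3)‖s‖³ be the cubic regularized model. If s* ∈ ℝⁿ is a global minimizer of m over ℝⁿ (i.e. m(s*) ≤ m(s) for all s ∈ ℝⁿ), then, setting λ* = σ‖s*‖, the vector s* satisfies (H + λ*I)s* = −g and the matrix H + λ*I is positive semidefinite. -/
/-!
Along every line `t ↦ s* + t • d` the model is minimal at `t = 0`, and the derivative there is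
`⟪g + H s* + σ‖s*‖ s*, d⟫`; this gives `(H + λ* I) s* = -g`.

Granted that, the cubic terms cancel on the sphere `‖s‖ = ‖s*‖` and
`m s - m s* = ½ ⟪s - s*, (H + λ* I) (s - s*)⟫` there. Every direction `d` with `⟪s*, d⟫ ≠ 0` is,
up to scaling, such a difference `s - s*` (take for `s` the reflection of `s*` in `d^⊥`), so the
quadratic form of `H + λ* I` is nonnegative off the hyperplane `s*^⊥`, hence everywhere by
continuity. If `s* = 0` then `g = 0` and `m (t • d) - m 0 = t² ⟪d, H d⟫ / 2 + O(t³)`.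
-/

open Matrix Set RealInnerProductSpace

theorem ContinuousAt.nonneg_of_forall_pos {f : ℝ → ℝ} (hf : ContinuousAt f 0)
    (h : ∀ ε > 0, 0 ≤ f ε) : 0 ≤ f 0 :=
  ge_of_tendsto (hf.tendsto.mono_left nhdsWithin_le_nhds)
    (eventually_nhdsWithin_of_forall (s := Ioi 0) h)

variable {E : Type*} [NormedAddCommGroup E] [InnerProductSpace ℝ E]

theorem norm_add_smul_eq_norm (x d : E) {a : ℝ} (ha : a * ‖d‖ ^ 2 = -2 * ⟪x, d⟫) :
    ‖x + a • d‖ = ‖x‖ := by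
  refine (sq_eq_sq₀ (norm_nonneg _) (norm_nonneg _)).1 ?_
  rw [norm_add_sq_real, norm_smul, real_inner_smul_right, mul_pow, Real.norm_eq_abs, sq_abs]
  linear_combination a * ha

theorem hasDerivAt_norm_add_smul_pow_three (x v : E) :
    HasDerivAt (fun t : ℝ => ‖x + t • v‖ ^ 3) (3 * ‖x‖ * ⟪x, v⟫) 0 := by
  have hline : HasDerivAt (fun t : ℝ => x + t • v) v 0 := by
    simpa using ((hasDerivAt_id (0 : ℝ)).smul_const v).const_add x
  have hcube := (hasFDerivAt_norm_rpow (x + (0 : ℝ) • v) (p := 3) (by norm_num)).comp_hasDerivAt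
    (0 : ℝ) hline
  refine (hcube.congr_deriv ?_).congr_of_eventuallyEq (.of_forall fun t => ?_)
  · norm_num
  · simp only [Function.comp_apply]
    exact_mod_cast (Real.rpow_natCast _ 3).symm

theorem LinearMap.IsSymmetric.inner_add_map_add {A : E →ₗ[ℝ] E} (hA : A.IsSymmetric) (s d : E) :
    ⟪s + d, A (s + d)⟫ = ⟪s, A s⟫ + 2 * ⟪A s, d⟫ + ⟪d, A d⟫ := by
  rw [map_add, inner_add_left, inner_add_right, inner_add_right, ← hA s d, real_inner_comm (A s) d]
  ring

noncomputable def cubicModel (f₀ : ℝ) (g : E) (A : E →ₗ[ℝ] E) (σ : ℝ) (s : E) : ℝ :=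
  f₀ + ⟪g, s⟫ + 1 / 2 * ⟪s, A s⟫ + σ / 3 * ‖s‖ ^ 3

variable {A : E →ₗ[ℝ] E} {f₀ σ : ℝ} {g s₀ : E}

theorem cubicModel_add (hA : A.IsSymmetric) (s d : E) :
    cubicModel f₀ g A σ (s + d) = cubicModel f₀ g A σ s + ⟪g + A s, d⟫ + 1 / 2 * ⟪d, A d⟫
      + σ / 3 * (‖s + d‖ ^ 3 - ‖s‖ ^ 3) := by
  simp only [cubicModel, hA.inner_add_map_add, inner_add_left, inner_add_right]
  ring

theorem hasDerivAt_cubicModel_add_smul (hA : A.IsSymmetric) (s d : E) :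
    HasDerivAt (fun t : ℝ => cubicModel f₀ g A σ (s + t • d)) ⟪g + A s + (σ * ‖s‖) • s, d⟫ 0 := by
  have hlin := (hasDerivAt_id' (0 : ℝ)).mul_const ⟪g + A s, d⟫
  have hquad := (hasDerivAt_pow 2 (0 : ℝ)).mul_const (1 / 2 * ⟪d, A d⟫)
  have hcube := ((hasDerivAt_norm_add_smul_pow_three s d).sub_const (‖s‖ ^ 3)).const_mul (σ / 3)
  refine (((hlin.add hquad).add hcube).const_add (cubicModel f₀ g A σ s) |>.congr_deriv ?_)
    |>.congr_of_eventuallyEq (.of_forall fun t => ?_)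
  · simp only [inner_add_left, real_inner_smul_left]
    ring
  · simp only [Pi.add_apply, cubicModel_add hA, map_smul, real_inner_smul_left,
      real_inner_smul_right]
    ring

theorem gradient_cubicModel_eq_zero_of_isMinOn (hA : A.IsSymmetric)
    (hmin : IsMinOn (cubicModel f₀ g A σ) univ s₀) : g + A s₀ + (σ * ‖s₀‖) • s₀ = 0 := by
  set v := g + A s₀ + (σ * ‖s₀‖) • s₀
  have hline : IsLocalMin (fun t : ℝ => cubicModel f₀ g A σ (s₀ + t • v)) 0 :=
    .of_forall fun t => by simpa using isMinOn_univ_iff.1 hmin (s₀ + t • v)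
  exact inner_self_eq_zero.1 (hline.hasDerivAt_eq_zero (hasDerivAt_cubicModel_add_smul hA s₀ v))

theorem cubicModel_add_sub_of_norm_eq (hA : A.IsSymmetric)
    (hgrad : g + A s₀ + (σ * ‖s₀‖) • s₀ = 0) {d : E} (hd : ‖s₀ + d‖ = ‖s₀‖) :
    cubicModel f₀ g A σ (s₀ + d) - cubicModel f₀ g A σ s₀
      = 1 / 2 * (⟪d, A d⟫ + σ * ‖s₀‖ * ‖d‖ ^ 2) := by
  have hg : g + A s₀ = -((σ * ‖s₀‖) • s₀) := eq_neg_of_add_eq_zero_left hgrad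
  have hsq : 2 * ⟪s₀, d⟫ = -‖d‖ ^ 2 := by
    have := congrArg (· ^ 2) hd
    simp only [norm_add_sq_real] at this
    linarith
  rw [cubicModel_add hA, hd, hg, inner_neg_left, real_inner_smul_left]
  linear_combination (-(σ * ‖s₀‖) / 2) * hsq

theorem inner_map_self_nonneg_of_isMinOn_zero (hA : A.IsSymmetric)
    (hmin : IsMinOn (cubicModel f₀ g A σ) univ 0) (d : E) : 0 ≤ ⟪d, A d⟫ := by
  have hg : g = 0 := by simpa using gradient_cubicModel_eq_zero_of_isMinOn hA hmin
  subst hg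
  have hlim := ContinuousAt.nonneg_of_forall_pos
    (f := fun t => ⟪d, A d⟫ + 2 * σ / 3 * t * ‖d‖ ^ 3) (by fun_prop) fun t ht => ?_
  · simpa using hlim
  have := isMinOn_univ_iff.1 hmin (t • d)
  simp only [cubicModel, inner_zero_left, inner_zero_right, map_zero, norm_zero, map_smul,
    real_inner_smul_left, real_inner_smul_right, norm_smul, Real.norm_eq_abs, abs_of_pos ht] at this
  refine (mul_nonneg_iff_of_pos_left (c := t ^ 2 / 2) (by positivity)).1 ?_
  linarith

theorem inner_map_self_add_mul_norm_sq_nonneg_of_inner_ne_zero (hA : A.IsSymmetric)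
    (hmin : IsMinOn (cubicModel f₀ g A σ) univ s₀) {d : E} (hd : ⟪s₀, d⟫ ≠ 0) :
    0 ≤ ⟪d, A d⟫ + σ * ‖s₀‖ * ‖d‖ ^ 2 := by
  have hd₀ : ‖d‖ ^ 2 ≠ 0 := pow_ne_zero 2 (norm_ne_zero_iff.2 (by rintro rfl; simp at hd))
  set a := -2 * ⟪s₀, d⟫ / ‖d‖ ^ 2
  have ha : a * ‖d‖ ^ 2 = -2 * ⟪s₀, d⟫ := div_mul_cancel₀ _ hd₀
  have ha₀ : a ≠ 0 := div_ne_zero (mul_ne_zero (by norm_num) hd) hd₀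
  have hdiff := cubicModel_add_sub_of_norm_eq (f₀ := f₀) hA
    (gradient_cubicModel_eq_zero_of_isMinOn hA hmin) (norm_add_smul_eq_norm s₀ d ha)
  have hle := sub_nonneg.2 (isMinOn_univ_iff.1 hmin (s₀ + a • d))
  rw [hdiff, map_smul, real_inner_smul_left, real_inner_smul_right, norm_smul, mul_pow,
    Real.norm_eq_abs, sq_abs] at hle
  refine (mul_nonneg_iff_of_pos_left (c := a ^ 2 / 2) (by positivity)).1 ?_
  linarith

theorem isPositive_add_smul_id_of_isMinOn (hA : A.IsSymmetric)
    (hmin : IsMinOn (cubicModel f₀ g A σ) univ s₀) :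
    (A + (σ * ‖s₀‖) • LinearMap.id).IsPositive := by
  refine (LinearMap.isPositive_iff _).2
    ⟨hA.add (LinearMap.IsSymmetric.id.smul (conj_trivial _)), fun d => ?_⟩
  suffices 0 ≤ ⟪d, A d⟫ + σ * ‖s₀‖ * ‖d‖ ^ 2 by
    rwa [LinearMap.add_apply, LinearMap.smul_apply, LinearMap.id_apply, inner_add_left,
      real_inner_smul_left, real_inner_self_eq_norm_sq, hA]
  rcases eq_or_ne s₀ 0 with rfl | hs₀
  · simpa using inner_map_self_nonneg_of_isMinOn_zero hA hmin d
  by_cases hd : ⟪s₀, d⟫ = 0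
  · have hlim := ContinuousAt.nonneg_of_forall_pos
      (f := fun ε => ⟪d + ε • s₀, A d + ε • A s₀⟫ + σ * ‖s₀‖ * ‖d + ε • s₀‖ ^ 2)
      (by fun_prop) fun ε hε => ?_
    · simpa using hlim
    rw [← map_smul, ← map_add]
    refine inner_map_self_add_mul_norm_sq_nonneg_of_inner_ne_zero hA hmin ?_
    rw [inner_add_right, hd, zero_add, real_inner_smul_right, real_inner_self_eq_norm_sq]
    positivity
  · exact inner_map_self_add_mul_norm_sq_nonneg_of_inner_ne_zero hA hmin hd

theorem cubic_model_global_minimizer_first_order_general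
    (n : ℕ) (H : Matrix (Fin n) (Fin n) ℝ) (hH : H.IsSymm)
    (g : EuclideanSpace ℝ (Fin n)) (f₀ σ : ℝ)
    (m : EuclideanSpace ℝ (Fin n) → ℝ)
    (hm : ∀ s : EuclideanSpace ℝ (Fin n),
      m s = f₀ + g ⬝ᵥ s + (1 / 2) * (s ⬝ᵥ H.mulVec s) + (σ / 3) * ‖s‖ ^ 3)
    (sstar : EuclideanSpace ℝ (Fin n))
    (hmin : ∀ s : EuclideanSpace ℝ (Fin n), m sstar ≤ m s) :
    (H + (σ * ‖sstar‖) • (1 : Matrix (Fin n) (Fin n) ℝ)).mulVec sstar = -g ∧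
      (H + (σ * ‖sstar‖) • (1 : Matrix (Fin n) (Fin n) ℝ)).PosSemidef := by
  have hA : (toEuclideanLin H).IsSymmetric :=
    isSymmetric_toEuclideanLin_iff.2 (isHermitian_iff_isSymm.2 hH)
  have hmodel : m = cubicModel f₀ g (toEuclideanLin H) σ := funext fun s => by
    simp [hm, cubicModel, EuclideanSpace.inner_eq_star_dotProduct, dotProduct_comm]
  have hmin' : IsMinOn (cubicModel f₀ g (toEuclideanLin H) σ) univ sstar :=
    isMinOn_univ_iff.2 (hmodel ▸ hmin)
  have hlin : toEuclideanLin (H + (σ * ‖sstar‖) • 1)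
      = toEuclideanLin H + (σ * ‖sstar‖) • LinearMap.id := by
    rw [map_add, map_smul, toLpLin_one]
  constructor
  · have hgrad := gradient_cubicModel_eq_zero_of_isMinOn hA hmin'
    change WithLp.ofLp (toEuclideanLin _ sstar) = WithLp.ofLp (-g)
    rw [hlin, LinearMap.add_apply, LinearMap.smul_apply, LinearMap.id_apply]
    congr 1
    rw [eq_neg_iff_add_eq_zero, add_comm, ← add_assoc, hgrad]
  · exact isPositive_toEuclideanLin_iff.1 (hlin ▸ isPositive_add_smul_id_of_isMinOn hA hmin')

/-- Any global minimizer `s*` of the cubic regularized model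
`m(s) = f₀ + gᵀs + (1/2)sᵀHs + (σ/3)‖s‖³` satisfies `(H + λ*I)s* = -g` with
`λ* = σ‖s*‖`, and `H + λ*I` is positive semidefinite. -/
theorem cubic_model_global_minimizer_first_order
    (n : ℕ) (H : Matrix (Fin n) (Fin n) ℝ) (hH : H.IsSymm)
    (g : EuclideanSpace ℝ (Fin n)) (f₀ σ : ℝ) (hσ : 0 < σ)
    (m : EuclideanSpace ℝ (Fin n) → ℝ)
    (hm : ∀ s : EuclideanSpace ℝ (Fin n),
      m s = f₀ + g ⬝ᵥ s + (1 / 2) * (s ⬝ᵥ H.mulVec s) + (σ / 3) * ‖s‖ ^ 3)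
    (sstar : EuclideanSpace ℝ (Fin n))
    (hmin : ∀ s : EuclideanSpace ℝ (Fin n), m sstar ≤ m s) :
    (H + (σ * ‖sstar‖) • (1 : Matrix (Fin n) (Fin n) ℝ)).mulVec sstar = -g ∧
      (H + (σ * ‖sstar‖) • (1 : Matrix (Fin n) (Fin n) ℝ)).PosSemidef :=
  cubic_model_global_minimizer_first_order_general n H hH g f₀ σ m hm sstar hmin
end

section
/- Let H be an n×n real symmetric matrix, g ∈ ℝⁿ, f₀ ∈ ℝ, σ > 0 and r > 0, and set λ̂ = σr. Let T(s) = f₀ + gᵀs + (1/2)sᵀHs. If s ∈ ℝⁿ satisfies (H + λ̂I)s = −g and sᵀ(H + λ̂I)s > 0, then T(0) − T(s) > (1/2)σr‖s‖². -/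
/-!
Writing `λ̂ = σr`, the Newton equation gives `-gᵀs = sᵀ(H + λ̂I)s`, so
`T(0) - T(s) = -gᵀs - ½ sᵀHs = ½ sᵀ(H + λ̂I)s + ½ λ̂‖s‖²`,
and the first term is positive by the curvature hypothesis.
-/

open Matrix

theorem dotProduct_add_smul_one_mulVec {ι R : Type*} [Fintype ι] [DecidableEq ι] [CommRing R]
    (H : Matrix ι ι R) (c : R) (s : ι → R) :
    s ⬝ᵥ (H + c • 1) *ᵥ s = s ⬝ᵥ H *ᵥ s + c * (s ⬝ᵥ s) := by
  rw [add_mulVec, smul_mulVec, one_mulVec, dotProduct_add, dotProduct_smul, smul_eq_mul]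

theorem neg_dotProduct_eq_of_mulVec_eq_neg {ι R : Type*} [Fintype ι] [CommRing R]
    {A : Matrix ι ι R} {g s : ι → R} (hs : A *ᵥ s = -g) :
    -(g ⬝ᵥ s) = s ⬝ᵥ A *ᵥ s := by
  rw [← neg_dotProduct, ← hs, dotProduct_comm]

theorem EuclideanSpace.dotProduct_self_eq_norm_sq {ι : Type*} [Fintype ι]
    (s : EuclideanSpace ℝ ι) : s ⬝ᵥ s = ‖s‖ ^ 2 := by
  rw [← real_inner_self_eq_norm_sq, EuclideanSpace.inner_eq_star_dotProduct, star_trivial]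

theorem taylor_decrease_regularized_newton_step_general
    (n : ℕ) (H : Matrix (Fin n) (Fin n) ℝ)
    (g : EuclideanSpace ℝ (Fin n)) (f₀ σ r : ℝ)
    (T : EuclideanSpace ℝ (Fin n) → ℝ)
    (hT : ∀ s : EuclideanSpace ℝ (Fin n),
      T s = f₀ + g ⬝ᵥ s + (1 / 2) * (s ⬝ᵥ H.mulVec s))
    (s : EuclideanSpace ℝ (Fin n))
    (hs : (H + (σ * r) • (1 : Matrix (Fin n) (Fin n) ℝ)).mulVec s = -g)
    (hcurv : 0 < s ⬝ᵥ (H + (σ * r) • (1 : Matrix (Fin n) (Fin n) ℝ)).mulVec s) :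
    T 0 - T s > (1 / 2) * σ * r * ‖s‖ ^ 2 := by
  have hgs := neg_dotProduct_eq_of_mulVec_eq_neg hs
  have hsplit := dotProduct_add_smul_one_mulVec H (σ * r) s
  rw [EuclideanSpace.dotProduct_self_eq_norm_sq] at hsplit
  have hT0 : T 0 = f₀ := by simp [hT]
  rw [hT0, hT s]
  linarith

/-- Decrease in the Taylor-series model for the regularized Newton step:
if `λ̂ = σr`, `(H + λ̂I)s = -g` and `sᵀ(H + λ̂I)s > 0`, then
`T(0) - T(s) > (1/2)σr‖s‖²`, where `T(s) = f₀ + gᵀs + (1/2)sᵀHs`. -/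
theorem taylor_decrease_regularized_newton_step
    (n : ℕ) (H : Matrix (Fin n) (Fin n) ℝ) (hH : H.IsSymm)
    (g : EuclideanSpace ℝ (Fin n)) (f₀ σ r : ℝ) (hσ : 0 < σ) (hr : 0 < r)
    (T : EuclideanSpace ℝ (Fin n) → ℝ)
    (hT : ∀ s : EuclideanSpace ℝ (Fin n),
      T s = f₀ + g ⬝ᵥ s + (1 / 2) * (s ⬝ᵥ H.mulVec s))
    (s : EuclideanSpace ℝ (Fin n))
    (hs : (H + (σ * r) • (1 : Matrix (Fin n) (Fin n) ℝ)).mulVec s = -g)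
    (hcurv : 0 < s ⬝ᵥ (H + (σ * r) • (1 : Matrix (Fin n) (Fin n) ℝ)).mulVec s) :
    T 0 - T s > (1 / 2) * σ * r * ‖s‖ ^ 2 :=
  taylor_decrease_regularized_newton_step_general n H g f₀ σ r T hT s hs hcurv
end

section
/- Let f : ℝⁿ → ℝ be twice continuously differentiable with L₂-Lipschitz Hessian, let x ∈ ℝⁿ, g = ∇f(x), H = ∇²f(x), and T(s) = f(x) + gᵀs + (1/2)sᵀHs. Let σ > 0, r > 0 and s ∈ ℝⁿ with s ≠ 0 be such that T(0) − T(s) ≥ (1/2)σr‖s‖². Then the ratio ρ = (f(x) − f(x+s))/(T(0) − T(s)) satisfies |ρ − 1| ≤ L₂‖s‖/(3σr). -/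
open RealInnerProductSpace Set

/-!
The ratio satisfies `ρ - 1 = (T(s) - f(x+s)) / (T(0) - T(s))`, so it suffices to bound the
Taylor remainder by `L₂‖s‖³/6` and divide by the assumed decrease `σr‖s‖²/2`. The remainder bound
comes from integrating twice along `t ↦ x + t • s`: the Lipschitz Hessian makes the derivative of
`t ↦ ∇f(x + t • s) - t • H s` of size `L₂ t ‖s‖²`, hence the gradient error is at most
`L₂ t² ‖s‖² / 2`, and this in turn is the derivative of the remainder along the segment.
-/

theorem norm_sub_le_div_of_norm_deriv_le_pow {F : Type*} [NormedAddCommGroup F]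
    [NormedSpace ℝ F] {w w' : ℝ → F} {C : ℝ} (k : ℕ) (hw : ContinuousOn w (Icc 0 1))
    (hw' : ∀ t ∈ Ico (0 : ℝ) 1, HasDerivWithinAt w (w' t) (Ici t) t)
    (bound : ∀ t ∈ Ico (0 : ℝ) 1, ‖w' t‖ ≤ C * t ^ k) :
    ‖w 1 - w 0‖ ≤ C / (k + 1) := by
  have hB : ∀ t : ℝ, HasDerivAt (fun t => C * t ^ (k + 1) / (k + 1)) (C * t ^ k) t := by
    intro t
    refine (((hasDerivAt_pow (k + 1) t).const_mul C).div_const ((k : ℝ) + 1)).congr_deriv ?_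
    push_cast
    field_simp
  have := image_norm_le_of_norm_deriv_right_le_deriv_boundary (hw.sub continuousOn_const)
    (fun t ht => (hw' t ht).sub_const (w 0)) (by simp) hB bound (right_mem_Icc.mpr zero_le_one)
  simpa using this

theorem norm_sub_sub_fderiv_le_of_lipschitz_fderiv {E F : Type*} [NormedAddCommGroup E]
    [NormedSpace ℝ E] [NormedAddCommGroup F] [NormedSpace ℝ F] {G : E → F} {x : E} {L : ℝ}
    (hG : Differentiable ℝ G) (hLip : ∀ y, ‖fderiv ℝ G y - fderiv ℝ G x‖ ≤ L * ‖y - x‖)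
    (s : E) : ‖G (x + s) - G x - fderiv ℝ G x s‖ ≤ L / 2 * ‖s‖ ^ 2 := by
  have hline : ∀ t : ℝ, HasDerivAt (fun t : ℝ => x + t • s) s t := fun t => by
    simpa using ((hasDerivAt_id t).smul_const s).const_add x
  have hw : ∀ t : ℝ, HasDerivAt (fun t : ℝ => G (x + t • s) - t • fderiv ℝ G x s)
      (fderiv ℝ G (x + t • s) s - fderiv ℝ G x s) t := fun t =>
    ((hG _).hasFDerivAt.comp_hasDerivAt t (hline t)).sub
      (by simpa using (hasDerivAt_id' t).smul_const (fderiv ℝ G x s))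
  have bound : ∀ t ∈ Ico (0 : ℝ) 1,
      ‖fderiv ℝ G (x + t • s) s - fderiv ℝ G x s‖ ≤ L * ‖s‖ ^ 2 * t ^ 1 := by
    intro t ht
    calc ‖fderiv ℝ G (x + t • s) s - fderiv ℝ G x s‖
        ≤ ‖fderiv ℝ G (x + t • s) - fderiv ℝ G x‖ * ‖s‖ :=
          (fderiv ℝ G (x + t • s) - fderiv ℝ G x).le_opNorm s
      _ ≤ L * ‖t • s‖ * ‖s‖ := by
          gcongr
          simpa using hLip (x + t • s)
      _ = L * ‖s‖ ^ 2 * t ^ 1 := by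
          rw [norm_smul, Real.norm_of_nonneg ht.1]
          ring
  have := norm_sub_le_div_of_norm_deriv_le_pow 1
    (fun t _ => (hw t).continuousAt.continuousWithinAt) (fun t _ => (hw t).hasDerivWithinAt)
    bound
  simp only [one_smul, zero_smul, add_zero, sub_zero, Nat.cast_one] at this
  convert this using 1
  · congr 1
    abel
  · ring

theorem abs_sub_taylor_le_of_lipschitz_hessian {E : Type*} [NormedAddCommGroup E]
    [InnerProductSpace ℝ E] [CompleteSpace E] {f : E → ℝ} {x : E} {L : ℝ}
    (hf : Differentiable ℝ f) (hgrad : Differentiable ℝ (gradient f))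
    (hLip : ∀ y, ‖fderiv ℝ (gradient f) y - fderiv ℝ (gradient f) x‖ ≤ L * ‖y - x‖) (s : E) :
    |f (x + s) - (f x + ⟪gradient f x, s⟫ + 1 / 2 * ⟪s, fderiv ℝ (gradient f) x s⟫)|
      ≤ L / 6 * ‖s‖ ^ 3 := by
  set H := fderiv ℝ (gradient f) x
  have hline : ∀ t : ℝ, HasDerivAt (fun t : ℝ => x + t • s) s t := fun t => by
    simpa using ((hasDerivAt_id t).smul_const s).const_add x
  have he : ∀ t : ℝ, HasDerivAt
      (fun t : ℝ => f (x + t • s) - t * ⟪gradient f x, s⟫ - t ^ 2 / 2 * ⟪s, H s⟫)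
      ⟪gradient f (x + t • s) - gradient f x - H (t • s), s⟫ t := fun t => by
    have hft := (hf (x + t • s)).hasGradientAt.hasFDerivAt.comp_hasDerivAt t (hline t)
    refine ((hft.sub ((hasDerivAt_id' t).mul_const ⟪gradient f x, s⟫)).sub
      (((hasDerivAt_pow 2 t).div_const 2).mul_const ⟪s, H s⟫)).congr_deriv ?_
    simp only [inner_sub_left, map_smul, inner_smul_left, InnerProductSpace.toDual_apply_apply,
      real_inner_comm s (H s), conj_trivial]
    norm_num
  have bound : ∀ t ∈ Ico (0 : ℝ) 1,
      ‖⟪gradient f (x + t • s) - gradient f x - H (t • s), s⟫‖ ≤ L / 2 * ‖s‖ ^ 3 * t ^ 2 := by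
    intro t ht
    calc ‖⟪gradient f (x + t • s) - gradient f x - H (t • s), s⟫‖
        ≤ ‖gradient f (x + t • s) - gradient f x - H (t • s)‖ * ‖s‖ := norm_inner_le_norm _ _
      _ ≤ L / 2 * ‖t • s‖ ^ 2 * ‖s‖ := by
          gcongr
          exact norm_sub_sub_fderiv_le_of_lipschitz_fderiv hgrad hLip (t • s)
      _ = L / 2 * ‖s‖ ^ 3 * t ^ 2 := by
          rw [norm_smul, Real.norm_of_nonneg ht.1]
          ring
  have := norm_sub_le_div_of_norm_deriv_le_pow 2
    (fun t _ => (he t).continuousAt.continuousWithinAt) (fun t _ => (he t).hasDerivWithinAt)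
    bound
  rw [Real.norm_eq_abs] at this
  convert this using 1
  · congr 1
    simp only [one_smul, zero_smul, add_zero]
    ring
  · push_cast
    ring

theorem ratio_bound_regularized_newton_general
    (n : ℕ) (f : EuclideanSpace ℝ (Fin n) → ℝ) (L₂ : ℝ)
    (hf : ContDiff ℝ 2 f)
    (hLip : ∀ y z : EuclideanSpace ℝ (Fin n),
      ‖fderiv ℝ (gradient f) y - fderiv ℝ (gradient f) z‖ ≤ L₂ * ‖y - z‖)
    (x : EuclideanSpace ℝ (Fin n))
    (T : EuclideanSpace ℝ (Fin n) → ℝ)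
    (hT : ∀ s : EuclideanSpace ℝ (Fin n),
      T s = f x + ⟪gradient f x, s⟫ + (1 / 2) * ⟪s, fderiv ℝ (gradient f) x s⟫)
    (σ r : ℝ) (hσ : 0 < σ) (hr : 0 < r)
    (s : EuclideanSpace ℝ (Fin n)) (hs : s ≠ 0)
    (hdec : T 0 - T s ≥ (1 / 2) * σ * r * ‖s‖ ^ 2) :
    |(f x - f (x + s)) / (T 0 - T s) - 1| ≤ L₂ * ‖s‖ / (3 * σ * r) := by
  have hgrad : ContDiff ℝ 1 (gradient f) :=
    (InnerProductSpace.toDual ℝ _).symm.contDiff.comp (hf.fderiv_right le_rfl)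
  have hrem : |f (x + s) - T s| ≤ L₂ / 6 * ‖s‖ ^ 3 := by
    rw [hT s]
    exact abs_sub_taylor_le_of_lipschitz_hessian (hf.differentiable two_ne_zero)
      (hgrad.differentiable one_ne_zero) (fun y => hLip y x) s
  have hT0 : T 0 = f x := by simp [hT 0]
  have hdec_pos : 0 < T 0 - T s := lt_of_lt_of_le (by positivity) hdec
  calc |(f x - f (x + s)) / (T 0 - T s) - 1| = |f (x + s) - T s| / (T 0 - T s) := by
        rw [div_sub_one hdec_pos.ne', abs_div, abs_of_pos hdec_pos, hT0, ← abs_neg]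
        ring_nf
    _ ≤ L₂ / 6 * ‖s‖ ^ 3 / ((1 / 2) * σ * r * ‖s‖ ^ 2) :=
        div_le_div₀ ((abs_nonneg _).trans hrem) hrem (by positivity) hdec
    _ = L₂ * ‖s‖ / (3 * σ * r) := by
        field_simp
        ring

/-- For `f` twice continuously differentiable with `L₂`-Lipschitz Hessian, if the step `s ≠ 0`
satisfies the Taylor decrease `T(0) - T(s) ≥ (1/2)σr‖s‖²`, then the acceptance ratio
`ρ = (f(x) - f(x+s))/(T(0) - T(s))` satisfies `|ρ - 1| ≤ L₂‖s‖/(3σr)`. -/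
theorem ratio_bound_regularized_newton
    (n : ℕ) (f : EuclideanSpace ℝ (Fin n) → ℝ) (L₂ : ℝ) (hL₂ : 0 < L₂)
    (hf : ContDiff ℝ 2 f)
    (hLip : ∀ y z : EuclideanSpace ℝ (Fin n),
      ‖fderiv ℝ (gradient f) y - fderiv ℝ (gradient f) z‖ ≤ L₂ * ‖y - z‖)
    (x : EuclideanSpace ℝ (Fin n))
    (T : EuclideanSpace ℝ (Fin n) → ℝ)
    (hT : ∀ s : EuclideanSpace ℝ (Fin n),
      T s = f x + ⟪gradient f x, s⟫ + (1 / 2) * ⟪s, fderiv ℝ (gradient f) x s⟫)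
    (σ r : ℝ) (hσ : 0 < σ) (hr : 0 < r)
    (s : EuclideanSpace ℝ (Fin n)) (hs : s ≠ 0)
    (hdec : T 0 - T s ≥ (1 / 2) * σ * r * ‖s‖ ^ 2) :
    |(f x - f (x + s)) / (T 0 - T s) - 1| ≤ L₂ * ‖s‖ / (3 * σ * r) :=
  ratio_bound_regularized_newton_general n f L₂ hf hLip x T hT σ r hσ hr s hs hdec
end

section
/- Let f : ℝⁿ → ℝ be twice continuously differentiable with L₂-Lipschitz Hessian, let x ∈ ℝⁿ, g = ∇f(x), H = ∇²f(x), and for σ > 0 let m(s) = f(x) + gᵀs + (1/2)sᵀHs + (σ/3)‖s‖³, whose gradient is ∇m(s) = g + Hs + σ‖s‖s. If s ∈ ℝⁿ satisfies ‖∇m(s)‖ ≤ (θ₁/2)‖s‖² for some θ₁ > 0, then ‖∇f(x+s)‖ ≤ ((L₂ + θ₁)/2 + σ)‖s‖². -/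
open RealInnerProductSpace

/-! Write `∇f(x+s) = r + ∇m(s) - σ‖s‖s` with `r = ∇f(x+s) - g - Hs`. The Taylor remainder `r` of
the gradient is at most `(L₂/2)‖s‖²` because the Hessian is `L₂`-Lipschitz, `‖∇m(s)‖ ≤ (θ₁/2)‖s‖²`
by assumption, and `‖σ‖s‖s‖ = σ‖s‖²`; the triangle inequality concludes. -/

theorem ContDiff.gradient {F : Type*} [NormedAddCommGroup F] [InnerProductSpace ℝ F]
    [CompleteSpace F] {f : F → ℝ} {n : WithTop ℕ∞} (hf : ContDiff ℝ (n + 1) f) :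
    ContDiff ℝ n (gradient f) :=
  (InnerProductSpace.toDual ℝ F).symm.contDiff.comp (hf.fderiv_right le_rfl)

section Taylor

variable {E F : Type*} [NormedAddCommGroup E] [NormedSpace ℝ E]
  [NormedAddCommGroup F] [NormedSpace ℝ F]

theorem norm_sub_sub_fderiv_le_of_norm_fderiv_sub_le {G : E → F} {L : ℝ}
    (hG : Differentiable ℝ G) (x : E)
    (hLip : ∀ y, ‖fderiv ℝ G y - fderiv ℝ G x‖ ≤ L * ‖y - x‖) (s : E) :
    ‖G (x + s) - G x - fderiv ℝ G x s‖ ≤ L / 2 * ‖s‖ ^ 2 := by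
  set φ : ℝ → F := fun t => G (x + t • s) - G x - t • fderiv ℝ G x s
  have hφ : ∀ t : ℝ, HasDerivAt φ (fderiv ℝ G (x + t • s) s - fderiv ℝ G x s) t := by
    intro t
    have hline : HasDerivAt (fun t : ℝ => x + t • s) s t := by
      simpa using ((hasDerivAt_id t).smul_const s).const_add x
    have := (((hG _).hasFDerivAt.comp_hasDerivAt t hline).sub_const (G x)).sub
      ((hasDerivAt_id t).smul_const (fderiv ℝ G x s))
    rwa [one_smul] at this
  have hfence : ∀ t : ℝ, HasDerivAt (fun t => L * ‖s‖ ^ 2 / 2 * t ^ 2) (L * ‖s‖ ^ 2 * t) t :=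
    fun t => ((hasDerivAt_pow 2 t).const_mul _).congr_deriv (by push_cast; ring)
  have hbound : ∀ t ∈ Set.Ico (0 : ℝ) 1,
      ‖fderiv ℝ G (x + t • s) s - fderiv ℝ G x s‖ ≤ L * ‖s‖ ^ 2 * t := by
    intro t ht
    have hclose := hLip (x + t • s)
    rw [add_sub_cancel_left, norm_smul, Real.norm_of_nonneg ht.1] at hclose
    calc ‖fderiv ℝ G (x + t • s) s - fderiv ℝ G x s‖
        ≤ ‖fderiv ℝ G (x + t • s) - fderiv ℝ G x‖ * ‖s‖ :=
          (fderiv ℝ G (x + t • s) - fderiv ℝ G x).le_opNorm s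
      _ ≤ L * (t * ‖s‖) * ‖s‖ := by gcongr
      _ = L * ‖s‖ ^ 2 * t := by ring
  have h0 : ‖φ 0‖ ≤ L * ‖s‖ ^ 2 / 2 * 0 ^ 2 := by simp [φ]
  have h1 : ‖φ 1‖ ≤ L * ‖s‖ ^ 2 / 2 * 1 ^ 2 :=
    image_norm_le_of_norm_deriv_right_le_deriv_boundary
      (fun t _ => (hφ t).continuousAt.continuousWithinAt) (fun t _ => (hφ t).hasDerivWithinAt)
      h0 hfence hbound (Set.right_mem_Icc.2 zero_le_one)
  simp only [φ, one_smul] at h1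
  linarith

end Taylor

theorem gradient_bound_cubic_model_step_general
    (n : ℕ) (f : EuclideanSpace ℝ (Fin n) → ℝ) (L₂ : ℝ)
    (hf : ContDiff ℝ 2 f)
    (hLip : ∀ y z : EuclideanSpace ℝ (Fin n),
      ‖fderiv ℝ (gradient f) y - fderiv ℝ (gradient f) z‖ ≤ L₂ * ‖y - z‖)
    (x : EuclideanSpace ℝ (Fin n))
    (σ θ₁ : ℝ) (hσ : 0 < σ)
    (s : EuclideanSpace ℝ (Fin n))
    (hgradm : ‖gradient f x + fderiv ℝ (gradient f) x s + (σ * ‖s‖) • s‖ ≤ θ₁ / 2 * ‖s‖ ^ 2) :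
    ‖gradient f (x + s)‖ ≤ ((L₂ + θ₁) / 2 + σ) * ‖s‖ ^ 2 := by
  set H := fderiv ℝ (gradient f) x
  have hremainder : ‖gradient f (x + s) - gradient f x - H s‖ ≤ L₂ / 2 * ‖s‖ ^ 2 :=
    norm_sub_sub_fderiv_le_of_norm_fderiv_sub_le
      ((hf.gradient (n := 1)).differentiable one_ne_zero) x (hLip · x) s
  have hcubic : ‖(σ * ‖s‖) • s‖ = σ * ‖s‖ ^ 2 := by
    rw [norm_smul, Real.norm_of_nonneg (by positivity)]
    ring
  calc ‖gradient f (x + s)‖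
      = ‖(gradient f (x + s) - gradient f x - H s)
          + (gradient f x + H s + (σ * ‖s‖) • s) - (σ * ‖s‖) • s‖ := by congr 1; abel
    _ ≤ ‖gradient f (x + s) - gradient f x - H s‖
          + ‖gradient f x + H s + (σ * ‖s‖) • s‖ + ‖(σ * ‖s‖) • s‖ :=
        (norm_sub_le _ _).trans (by gcongr; exact norm_add_le _ _)
    _ ≤ L₂ / 2 * ‖s‖ ^ 2 + θ₁ / 2 * ‖s‖ ^ 2 + σ * ‖s‖ ^ 2 := by rw [hcubic]; gcongr
    _ = ((L₂ + θ₁) / 2 + σ) * ‖s‖ ^ 2 := by ring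

/-- Gradient bound after an approximate cubic-model minimization step: if
`‖∇m(s)‖ ≤ (θ₁/2)‖s‖²`, where `∇m(s) = g + Hs + σ‖s‖s`, then
`‖∇f(x+s)‖ ≤ ((L₂ + θ₁)/2 + σ)‖s‖²`. -/
theorem gradient_bound_cubic_model_step
    (n : ℕ) (f : EuclideanSpace ℝ (Fin n) → ℝ) (L₂ : ℝ) (hL₂ : 0 < L₂)
    (hf : ContDiff ℝ 2 f)
    (hLip : ∀ y z : EuclideanSpace ℝ (Fin n),
      ‖fderiv ℝ (gradient f) y - fderiv ℝ (gradient f) z‖ ≤ L₂ * ‖y - z‖)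
    (x : EuclideanSpace ℝ (Fin n))
    (σ θ₁ : ℝ) (hσ : 0 < σ) (hθ₁ : 0 < θ₁)
    (s : EuclideanSpace ℝ (Fin n))
    (hgradm : ‖gradient f x + fderiv ℝ (gradient f) x s + (σ * ‖s‖) • s‖ ≤ θ₁ / 2 * ‖s‖ ^ 2) :
    ‖gradient f (x + s)‖ ≤ ((L₂ + θ₁) / 2 + σ) * ‖s‖ ^ 2 :=
  gradient_bound_cubic_model_step_general n f L₂ hf hLip x σ θ₁ hσ s hgradm
end

section
/- Let σ₀ > 0, γ₁ ∈ (0,1), γ₂ > 1 and σ_max > 0, and let (σ_j)_{j≥0} be a sequence of positive real numbers with σ₀ as its first term. Let k ≥ 1 and suppose the index set {0,…,k−1} is partitioned into disjoint sets S and U such that σ_{j+1} ≥ γ₁σ_j for every j ∈ S and σ_{j+1} ≥ γ₂σ_j for every j ∈ U, and suppose σ_k ≤ σ_max. Then |U| ≤ |S|·log(1/γ₁)/log(γ₂) + log(σ_max/σ₀)/log(γ₂). -/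
/-! Telescoping the one-step bounds gives `σ₀ γ₁^|S| γ₂^|U| ≤ σ_k ≤ σ_max`; taking logarithms
and solving for `|U|` (using `log γ₂ > 0`) gives the bound. -/

open Finset Real

theorem mul_prod_range_le_of_mul_le {σ c : ℕ → ℝ} {n : ℕ} (hc : ∀ j < n, 0 ≤ c j)
    (hstep : ∀ j < n, c j * σ j ≤ σ (j + 1)) : σ 0 * ∏ j ∈ range n, c j ≤ σ n := by
  induction n with
  | zero => simp
  | succ m ih =>
    have ih := ih (fun j hj => hc j (by omega)) (fun j hj => hstep j (by omega))
    calc σ 0 * ∏ j ∈ range (m + 1), c j = c m * (σ 0 * ∏ j ∈ range m, c j) := by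
          rw [prod_range_succ]; ring
      _ ≤ c m * σ m := mul_le_mul_of_nonneg_left ih (hc m m.lt_succ_self)
      _ ≤ σ (m + 1) := hstep m m.lt_succ_self

theorem mul_pow_card_mul_pow_card_le {σ : ℕ → ℝ} {a b : ℝ} {k : ℕ} {S U : Finset ℕ}
    (ha : 0 ≤ a) (hb : 0 ≤ b) (hdisj : Disjoint S U) (hunion : S ∪ U = range k)
    (hS : ∀ j ∈ S, a * σ j ≤ σ (j + 1)) (hU : ∀ j ∈ U, b * σ j ≤ σ (j + 1)) :
    σ 0 * (a ^ #S * b ^ #U) ≤ σ k := by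
  have hU_not_S : ∀ j ∈ U, j ∉ S := fun j hj => disjoint_right.mp hdisj hj
  have hprod : ∏ j ∈ range k, (if j ∈ S then a else b) = a ^ #S * b ^ #U := by
    rw [← hunion, prod_union hdisj, prod_congr rfl fun j hj => if_pos hj,
      prod_congr rfl fun j hj => if_neg (hU_not_S j hj), prod_const, prod_const]
  rw [← hprod]
  refine mul_prod_range_le_of_mul_le (fun j _ => by split_ifs <;> assumption) fun j hj => ?_
  rcases mem_union.mp (hunion ▸ mem_range.mpr hj) with hjS | hjU
  · simpa [hjS] using hS j hjS
  · simpa [hU_not_S j hjU] using hU j hjU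

theorem natCast_le_of_mul_pow_mul_pow_le {a b x y : ℝ} {s u : ℕ} (ha : 0 < a) (hb : 1 < b)
    (hx : 0 < x) (hy : 0 < y) (h : x * (a ^ s * b ^ u) ≤ y) :
    (u : ℝ) ≤ s * log (1 / a) / log b + log (y / x) / log b := by
  have hlog := log_le_log (by positivity) h
  rw [log_mul hx.ne' (by positivity), log_mul (by positivity) (by positivity), log_pow,
    log_pow] at hlog
  rw [one_div, log_inv, log_div hy.ne' hx.ne', ← add_div, le_div_iff₀ (log_pos hb)]
  linarith

theorem unsuccessful_iterations_bound_general
    (σ : ℕ → ℝ) (σ₀ : ℝ) (hσ₀ : σ 0 = σ₀) (hσ₀pos : 0 < σ₀)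
    (γ₁ γ₂ σ_max : ℝ) (hγ₁ : γ₁ ∈ Set.Ioo (0 : ℝ) 1) (hγ₂ : 1 < γ₂) (hσmax : 0 < σ_max)
    (k : ℕ)
    (S U : Finset ℕ)
    (hdisj : Disjoint S U) (hunion : S ∪ U = Finset.range k)
    (hS : ∀ j ∈ S, γ₁ * σ j ≤ σ (j + 1))
    (hU : ∀ j ∈ U, γ₂ * σ j ≤ σ (j + 1))
    (hbound : σ k ≤ σ_max) :
    (U.card : ℝ) ≤ (S.card : ℝ) * Real.log (1 / γ₁) / Real.log γ₂ +
      Real.log (σ_max / σ₀) / Real.log γ₂ := by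
  have hgrowth := mul_pow_card_mul_pow_card_le hγ₁.1.le (by linarith) hdisj hunion hS hU
  rw [hσ₀] at hgrowth
  exact natCast_le_of_mul_pow_mul_pow_le hγ₁.1 hγ₂ hσ₀pos hσmax (hgrowth.trans hbound)

/-- Bound on the number of unsuccessful iterations: if on successful iterations `j ∈ S`
the regularization parameter satisfies `σ_{j+1} ≥ γ₁σ_j` and on unsuccessful iterations
`j ∈ U` it satisfies `σ_{j+1} ≥ γ₂σ_j`, with `S ∪ U = {0,…,k-1}` disjoint and
`σ_k ≤ σ_max`, then `|U| ≤ |S|·log(1/γ₁)/log γ₂ + log(σ_max/σ₀)/log γ₂`. -/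
theorem unsuccessful_iterations_bound
    (σ : ℕ → ℝ) (σ₀ : ℝ) (hσ₀ : σ 0 = σ₀) (hσ₀pos : 0 < σ₀)
    (γ₁ γ₂ σ_max : ℝ) (hγ₁ : γ₁ ∈ Set.Ioo (0 : ℝ) 1) (hγ₂ : 1 < γ₂) (hσmax : 0 < σ_max)
    (hpos : ∀ j, 0 < σ j)
    (k : ℕ) (hk : 1 ≤ k)
    (S U : Finset ℕ)
    (hdisj : Disjoint S U) (hunion : S ∪ U = Finset.range k)
    (hS : ∀ j ∈ S, γ₁ * σ j ≤ σ (j + 1))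
    (hU : ∀ j ∈ U, γ₂ * σ j ≤ σ (j + 1))
    (hbound : σ k ≤ σ_max) :
    (U.card : ℝ) ≤ (S.card : ℝ) * Real.log (1 / γ₁) / Real.log γ₂ +
      Real.log (σ_max / σ₀) / Real.log γ₂ :=
  unsuccessful_iterations_bound_general σ σ₀ hσ₀ hσ₀pos γ₁ γ₂ σ_max hγ₁ hγ₂ hσmax k S U hdisj hunion
    hS hU hbound
end

section
/- Let σ₀ > 0, γ₁ ∈ (0,1), γ₂ > 1 and σ_max > 0, and let (σ_j)_{j≥0} be a sequence of positive real numbers with σ₀ as its first term. Let k ≥ 1 and suppose {0,…,k−1} is partitioned into three disjoint sets S, U₁ and U₂ such that σ_{j+1} ≥ γ₁σ_j for j ∈ S, σ_{j+1} ≥ γ₂σ_j for j ∈ U₁, and σ_{j+1} = σ_j for j ∈ U₂, and suppose σ_k ≤ σ_max and |U₂| ≤ (|S| + |U₁|)/2. Then k ≤ |S|·(3/2 + (3/2)·log(1/γ₁)/log(γ₂)) + (3/2)·log(σ_max/σ₀)/log(γ₂). -/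
/-- Bound on the total number of iterations of FAR2: if on iterations in `S`
the regularization parameter satisfies `σ_{j+1} ≥ γ₁σ_j`, on iterations in `U₁`
it satisfies `σ_{j+1} ≥ γ₂σ_j`, and on iterations in `U₂` it is unchanged, with
`S, U₁, U₂` a partition of `{0,…,k-1}`, `σ_k ≤ σ_max`, and `|U₂| ≤ (|S| + |U₁|)/2`,
then `k ≤ |S|(3/2 + (3/2)log(1/γ₁)/log γ₂) + (3/2)log(σ_max/σ₀)/log γ₂`. -/
theorem total_iterations_bound
    (σ : ℕ → ℝ) (σ₀ : ℝ) (hσ₀ : σ 0 = σ₀) (hσ₀pos : 0 < σ₀)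
    (γ₁ γ₂ σ_max : ℝ) (hγ₁ : γ₁ ∈ Set.Ioo (0 : ℝ) 1) (hγ₂ : 1 < γ₂) (hσmax : 0 < σ_max)
    (hpos : ∀ j, 0 < σ j)
    (k : ℕ) (hk : 1 ≤ k)
    (S U₁ U₂ : Finset ℕ)
    (hd₁ : Disjoint S U₁) (hd₂ : Disjoint S U₂) (hd₃ : Disjoint U₁ U₂)
    (hunion : S ∪ U₁ ∪ U₂ = Finset.range k)
    (hS : ∀ j ∈ S, γ₁ * σ j ≤ σ (j + 1))
    (hU₁ : ∀ j ∈ U₁, γ₂ * σ j ≤ σ (j + 1))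
    (hU₂ : ∀ j ∈ U₂, σ (j + 1) = σ j)
    (hbound : σ k ≤ σ_max)
    (hU₂card : (U₂.card : ℝ) ≤ ((S.card : ℝ) + (U₁.card : ℝ)) / 2) :
    (k : ℝ) ≤ (S.card : ℝ) * (3 / 2 + (3 / 2) * Real.log (1 / γ₁) / Real.log γ₂) +
      (3 / 2) * Real.log (σ_max / σ₀) / Real.log γ₂ := by
  obtain ⟨hγ₁pos, hγ₁lt⟩ := hγ₁
  have hγ₂pos : (0:ℝ) < γ₂ := lt_trans one_pos hγ₂
  -- key telescoping inequality
  have key : ∀ n, n ≤ k →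
      σ₀ * γ₁ ^ (S ∩ Finset.range n).card * γ₂ ^ (U₁ ∩ Finset.range n).card ≤ σ n := by
    intro n hn
    induction n with
    | zero => simp [hσ₀]
    | succ m ih =>
      have hm : m ≤ k := le_of_lt (Nat.lt_of_succ_le hn)
      have ihm := ih hm
      have hmem : m ∈ S ∪ U₁ ∪ U₂ := by
        rw [hunion]; exact Finset.mem_range.mpr (Nat.lt_of_succ_le hn)
      have hranS : (S ∩ Finset.range (m+1)).card =
          (S ∩ Finset.range m).card + (if m ∈ S then 1 else 0) := by
        by_cases h : m ∈ S
        · rw [Finset.range_add_one, Finset.inter_comm, Finset.insert_inter_of_mem h,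
            Finset.card_insert_of_notMem (by simp), Finset.inter_comm]
          simp [h]
        · rw [Finset.range_add_one, Finset.inter_comm, Finset.insert_inter_of_notMem h,
            Finset.inter_comm]
          simp [h]
      have hranU : (U₁ ∩ Finset.range (m+1)).card =
          (U₁ ∩ Finset.range m).card + (if m ∈ U₁ then 1 else 0) := by
        by_cases h : m ∈ U₁
        · rw [Finset.range_add_one, Finset.inter_comm, Finset.insert_inter_of_mem h,
            Finset.card_insert_of_notMem (by simp), Finset.inter_comm]
          simp [h]
        · rw [Finset.range_add_one, Finset.inter_comm, Finset.insert_inter_of_notMem h,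
            Finset.inter_comm]
          simp [h]
      have hpm := hpos m
      have hbase : 0 < σ₀ * γ₁ ^ (S ∩ Finset.range m).card * γ₂ ^ (U₁ ∩ Finset.range m).card :=
        by positivity
      rcases Finset.mem_union.mp hmem with hmem' | hmU₂
      · rcases Finset.mem_union.mp hmem' with hmS | hmU₁
        · have hmU₁ : m ∉ U₁ := fun h => (Finset.disjoint_left.mp hd₁ hmS) h
          rw [hranS, hranU]
          simp only [hmS, hmU₁, if_true, if_false, add_zero, pow_succ]
          calc σ₀ * (γ₁ ^ (S ∩ Finset.range m).card * γ₁) * γ₂ ^ (U₁ ∩ Finset.range m).card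
              = γ₁ * (σ₀ * γ₁ ^ (S ∩ Finset.range m).card * γ₂ ^ (U₁ ∩ Finset.range m).card) := by ring
            _ ≤ γ₁ * σ m := by
                exact mul_le_mul_of_nonneg_left ihm (le_of_lt hγ₁pos)
            _ ≤ σ (m+1) := hS m hmS
        · have hmS : m ∉ S := fun h => (Finset.disjoint_left.mp hd₁ h) hmU₁
          rw [hranS, hranU]
          simp only [hmS, hmU₁, if_true, if_false, add_zero, pow_succ]
          calc σ₀ * γ₁ ^ (S ∩ Finset.range m).card * (γ₂ ^ (U₁ ∩ Finset.range m).card * γ₂)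
              = γ₂ * (σ₀ * γ₁ ^ (S ∩ Finset.range m).card * γ₂ ^ (U₁ ∩ Finset.range m).card) := by ring
            _ ≤ γ₂ * σ m := mul_le_mul_of_nonneg_left ihm (le_of_lt hγ₂pos)
            _ ≤ σ (m+1) := hU₁ m hmU₁
      · have hmS : m ∉ S := fun h => (Finset.disjoint_left.mp hd₂ h) hmU₂
        have hmU₁ : m ∉ U₁ := fun h => (Finset.disjoint_left.mp hd₃ h) hmU₂
        rw [hranS, hranU]
        simp only [hmS, hmU₁, if_false, add_zero]
        rw [hU₂ m hmU₂]
        exact ihm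
  have hSsub : S ⊆ Finset.range k := by
    rw [← hunion]; exact Finset.subset_union_left.trans Finset.subset_union_left
  have hU₁sub : U₁ ⊆ Finset.range k := by
    rw [← hunion]; exact Finset.subset_union_right.trans Finset.subset_union_left
  have hSk : S ∩ Finset.range k = S := Finset.inter_eq_left.mpr hSsub
  have hU₁k : U₁ ∩ Finset.range k = U₁ := Finset.inter_eq_left.mpr hU₁sub
  have hkey := key k le_rfl
  rw [hSk, hU₁k] at hkey
  have hfinal : σ₀ * γ₁ ^ S.card * γ₂ ^ U₁.card ≤ σ_max := le_trans hkey hbound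
  -- take logs
  set s : ℝ := (S.card : ℝ)
  set u : ℝ := (U₁.card : ℝ)
  set t : ℝ := (U₂.card : ℝ)
  have hlog : Real.log σ₀ + s * Real.log γ₁ + u * Real.log γ₂ ≤ Real.log σ_max := by
    have h1 : Real.log (σ₀ * γ₁ ^ S.card * γ₂ ^ U₁.card) ≤ Real.log σ_max :=
      Real.log_le_log (by positivity) hfinal
    rwa [Real.log_mul (by positivity) (by positivity),
      Real.log_mul (by positivity) (by positivity),
      Real.log_pow, Real.log_pow] at h1
  have hlogγ₂ : 0 < Real.log γ₂ := Real.log_pos hγ₂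
  have hlog1γ₁ : Real.log (1/γ₁) = - Real.log γ₁ := by
    rw [one_div, Real.log_inv]
  have hlograt : Real.log (σ_max / σ₀) = Real.log σ_max - Real.log σ₀ :=
    Real.log_div (ne_of_gt hσmax) (ne_of_gt hσ₀pos)
  -- card count
  have hcard : (k : ℝ) = s + u + t := by
    have h1 : (S ∪ U₁ ∪ U₂).card = S.card + U₁.card + U₂.card := by
      rw [Finset.card_union_of_disjoint, Finset.card_union_of_disjoint hd₁]
      exact Finset.disjoint_union_left.mpr ⟨hd₂, hd₃⟩
    have h2 : (S ∪ U₁ ∪ U₂).card = k := by rw [hunion, Finset.card_range]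
    have := h1 ▸ h2
    push_cast [← this]
    ring
  -- bound on u
  have hu : u * Real.log γ₂ ≤ Real.log (σ_max / σ₀) + s * Real.log (1/γ₁) := by
    rw [hlograt, hlog1γ₁]; linarith
  have hudiv : u ≤ (Real.log (σ_max / σ₀) + s * Real.log (1/γ₁)) / Real.log γ₂ :=
    (le_div_iff₀ hlogγ₂).mpr hu
  have hsnn : (0:ℝ) ≤ s := Nat.cast_nonneg _
  rw [hcard]
  have h32 : s + u + t ≤ (3/2) * (s + u) := by linarith
  calc s + u + t ≤ (3/2) * (s + u) := h32
    _ ≤ (3/2) * (s + (Real.log (σ_max / σ₀) + s * Real.log (1/γ₁)) / Real.log γ₂) := by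
        nlinarith [hudiv]
    _ = s * (3 / 2 + (3 / 2) * Real.log (1 / γ₁) / Real.log γ₂) +
      (3 / 2) * Real.log (σ_max / σ₀) / Real.log γ₂ := by
        field_simp
        ring
end

section
/- Let H be an n×n real symmetric matrix, g ∈ ℝⁿ and λ ∈ ℝ be such that H + λI is invertible, and set s = −(H + λI)⁻¹g. Suppose every eigenvalue of (H + λI)⁻² lies in the interval [θ_min, θ_max] with 0 < θ_min ≤ θ_max, and let ρ̂ ≥ 0 be a real number satisfying θ̂_min‖g‖² ≤ ρ̂² ≤ θ̂_max‖g‖² with 0 < θ̂_min ≤ θ̂_max. Then θ_min‖g‖² ≤ ‖s‖² ≤ θ_max‖g‖² and, consequently, (θ_min/θ̂_max)·ρ̂² ≤ ‖s‖² ≤ (θ_max/θ̂_min)·ρ̂². -/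
open Matrix
open scoped MatrixOrder

/-!
Since `H` is symmetric, so is `B = (H + λI)⁻¹`, hence `‖s‖² = ‖B g‖² = gᵀ B² g`. The eigenvalue
bounds on the symmetric matrix `B²` are the Loewner-order bounds `θ_min I ≤ B² ≤ θ_max I`, which
sandwich this quadratic form between `θ_min ‖g‖²` and `θ_max ‖g‖²`. Comparing `‖g‖²` with `ρ̂²`
gives the bounds in terms of `ρ̂`.
-/

namespace Matrix

variable {n : Type*} [Fintype n] [DecidableEq n]

theorem exists_mulVec_eq_smul_of_mem_spectrum {K : Type*} [Field K] {A : Matrix n n K} {μ : K}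
    (hμ : μ ∈ spectrum K A) : ∃ v ≠ 0, A *ᵥ v = μ • v := by
  rw [← spectrum_toLin', ← Module.End.hasEigenvalue_iff_mem_spectrum] at hμ
  obtain ⟨v, hv⟩ := hμ.exists_hasEigenvector
  exact ⟨v, hv.2, hv.apply_eq_smul⟩

theorem IsSymm.mulVec_dotProduct_mulVec_self {R : Type*} [CommSemiring R] {B : Matrix n n R}
    (hB : B.IsSymm) (x : n → R) : B *ᵥ x ⬝ᵥ B *ᵥ x = x ⬝ᵥ (B ^ 2) *ᵥ x := by
  rw [sq, ← mulVec_mulVec, dotProduct_mulVec, ← mulVec_transpose, hB.eq, dotProduct_comm]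

namespace IsHermitian

variable {A : Matrix n n ℝ} (hA : A.IsHermitian)
include hA

theorem mul_dotProduct_self_le_of_le_spectrum {a : ℝ} (h : ∀ μ ∈ spectrum ℝ A, a ≤ μ)
    (x : n → ℝ) : a * (x ⬝ᵥ x) ≤ x ⬝ᵥ A *ᵥ x := by
  have hpsd : (A - algebraMap ℝ _ a).PosSemidef :=
    (algebraMap_le_iff_le_spectrum hA.isSelfAdjoint).2 h
  have := hpsd.dotProduct_mulVec_nonneg x
  simp only [star_trivial, Algebra.algebraMap_eq_smul_one, sub_mulVec, smul_mulVec, one_mulVec,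
    dotProduct_sub, dotProduct_smul, smul_eq_mul] at this
  linarith

theorem dotProduct_mulVec_le_of_spectrum_le {b : ℝ} (h : ∀ μ ∈ spectrum ℝ A, μ ≤ b)
    (x : n → ℝ) : x ⬝ᵥ A *ᵥ x ≤ b * (x ⬝ᵥ x) := by
  have hpsd : (algebraMap ℝ _ b - A).PosSemidef :=
    (le_algebraMap_iff_spectrum_le hA.isSelfAdjoint).2 h
  have := hpsd.dotProduct_mulVec_nonneg x
  simp only [star_trivial, Algebra.algebraMap_eq_smul_one, sub_mulVec, smul_mulVec, one_mulVec,
    dotProduct_sub, dotProduct_smul, smul_eq_mul] at this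
  linarith

end IsHermitian

end Matrix

theorem EuclideanSpace.real_norm_sq_eq_dotProduct {n : Type*} [Fintype n]
    (x : EuclideanSpace ℝ n) : ‖x‖ ^ 2 = x.ofLp ⬝ᵥ x.ofLp := by
  rw [← real_inner_self_eq_norm_sq, EuclideanSpace.inner_eq_star_dotProduct, star_trivial]

theorem div_mul_le_of_mul_le_of_le_mul {a d t r x : ℝ} (ha : 0 ≤ a) (hd : 0 < d)
    (hx : a * t ≤ x) (hr : r ≤ d * t) : a / d * r ≤ x := by
  calc a / d * r ≤ a / d * (d * t) := by gcongr
    _ = a * t := by field_simp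
    _ ≤ x := hx

theorem le_div_mul_of_le_mul_of_mul_le {b c t r x : ℝ} (hb : 0 ≤ b) (hc : 0 < c)
    (hx : x ≤ b * t) (hr : c * t ≤ r) : x ≤ b / c * r := by
  calc x ≤ b * t := hx
    _ = b / c * (c * t) := by field_simp
    _ ≤ b / c * r := by gcongr

theorem step_norm_bounds_general
    (n : ℕ) (H : Matrix (Fin n) (Fin n) ℝ) (hH : H.IsSymm)
    (g : EuclideanSpace ℝ (Fin n)) (lam : ℝ)
    (s : EuclideanSpace ℝ (Fin n))
    (hs : s = -((H + lam • (1 : Matrix (Fin n) (Fin n) ℝ))⁻¹.mulVec g))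
    (θ_min θ_max : ℝ) (hθmin : 0 < θ_min) (hθ : θ_min ≤ θ_max)
    (heig : ∀ μ : ℝ,
      (∃ v : EuclideanSpace ℝ (Fin n), v ≠ 0 ∧
        (((H + lam • (1 : Matrix (Fin n) (Fin n) ℝ))⁻¹) ^ 2).mulVec v = μ • v) →
      θ_min ≤ μ ∧ μ ≤ θ_max)
    (θh_min θh_max : ℝ) (hθhmin : 0 < θh_min) (hθh : θh_min ≤ θh_max)
    (ρh : ℝ)
    (hρhlow : θh_min * ‖g‖ ^ 2 ≤ ρh ^ 2) (hρhup : ρh ^ 2 ≤ θh_max * ‖g‖ ^ 2) :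
    (θ_min * ‖g‖ ^ 2 ≤ ‖s‖ ^ 2 ∧ ‖s‖ ^ 2 ≤ θ_max * ‖g‖ ^ 2) ∧
      (θ_min / θh_max) * ρh ^ 2 ≤ ‖s‖ ^ 2 ∧ ‖s‖ ^ 2 ≤ (θ_max / θh_min) * ρh ^ 2 := by
  set B := (H + lam • (1 : Matrix (Fin n) (Fin n) ℝ))⁻¹
  have hB : B.IsSymm := (hH.add (isSymm_one.smul lam)).inv
  have hspec : ∀ μ ∈ spectrum ℝ (B ^ 2), θ_min ≤ μ ∧ μ ≤ θ_max := fun μ hμ ↦ by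
    obtain ⟨v, hv0, hv⟩ := exists_mulVec_eq_smul_of_mem_spectrum hμ
    exact heig μ ⟨WithLp.toLp 2 v, by simpa using hv0, hv⟩
  have hs2 : ‖s‖ ^ 2 = g.ofLp ⬝ᵥ (B ^ 2) *ᵥ g.ofLp := by
    rw [EuclideanSpace.real_norm_sq_eq_dotProduct, hs, neg_dotProduct_neg,
      hB.mulVec_dotProduct_mulVec_self]
  have hM : (B ^ 2).IsHermitian := isHermitian_iff_isSymm.2 (hB.pow 2)
  have hlow := hM.mul_dotProduct_self_le_of_le_spectrum (fun μ hμ ↦ (hspec μ hμ).1) g.ofLp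
  have hup := hM.dotProduct_mulVec_le_of_spectrum_le (fun μ hμ ↦ (hspec μ hμ).2) g.ofLp
  rw [← hs2, ← EuclideanSpace.real_norm_sq_eq_dotProduct] at hlow hup
  exact ⟨⟨hlow, hup⟩,
    div_mul_le_of_mul_le_of_le_mul hθmin.le (hθhmin.trans_le hθh) hlow hρhup,
    le_div_mul_of_le_mul_of_mul_le (hθmin.le.trans hθ) hθhmin hup hρhlow⟩

/-- If `s = -(H + λI)⁻¹g`, every eigenvalue of `(H + λI)⁻²` lies in `[θ_min, θ_max]`,
and `θ̂_min‖g‖² ≤ ρ̂² ≤ θ̂_max‖g‖²`, then `θ_min‖g‖² ≤ ‖s‖² ≤ θ_max‖g‖²` and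
`(θ_min/θ̂_max)ρ̂² ≤ ‖s‖² ≤ (θ_max/θ̂_min)ρ̂²`. -/
theorem step_norm_bounds
    (n : ℕ) (H : Matrix (Fin n) (Fin n) ℝ) (hH : H.IsSymm)
    (g : EuclideanSpace ℝ (Fin n)) (lam : ℝ)
    (hinv : IsUnit (H + lam • (1 : Matrix (Fin n) (Fin n) ℝ)))
    (s : EuclideanSpace ℝ (Fin n))
    (hs : s = -((H + lam • (1 : Matrix (Fin n) (Fin n) ℝ))⁻¹.mulVec g))
    (θ_min θ_max : ℝ) (hθmin : 0 < θ_min) (hθ : θ_min ≤ θ_max)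
    (heig : ∀ μ : ℝ,
      (∃ v : EuclideanSpace ℝ (Fin n), v ≠ 0 ∧
        (((H + lam • (1 : Matrix (Fin n) (Fin n) ℝ))⁻¹) ^ 2).mulVec v = μ • v) →
      θ_min ≤ μ ∧ μ ≤ θ_max)
    (θh_min θh_max : ℝ) (hθhmin : 0 < θh_min) (hθh : θh_min ≤ θh_max)
    (ρh : ℝ) (hρh : 0 ≤ ρh)
    (hρhlow : θh_min * ‖g‖ ^ 2 ≤ ρh ^ 2) (hρhup : ρh ^ 2 ≤ θh_max * ‖g‖ ^ 2) :
    (θ_min * ‖g‖ ^ 2 ≤ ‖s‖ ^ 2 ∧ ‖s‖ ^ 2 ≤ θ_max * ‖g‖ ^ 2) ∧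
      (θ_min / θh_max) * ρh ^ 2 ≤ ‖s‖ ^ 2 ∧ ‖s‖ ^ 2 ≤ (θ_max / θh_min) * ρh ^ 2 :=
  step_norm_bounds_general n H hH g lam s hs θ_min θ_max hθmin hθ heig θh_min θh_max hθhmin hθh ρh
    hρhlow hρhup
end

section
/- Let f : ℝⁿ → ℝ be twice continuously differentiable with L₂-Lipschitz Hessian, let x ∈ ℝⁿ, g = ∇f(x), H = ∇²f(x). Let σ > 0 with σ ≤ σ_max, r > 0 and C_up > 0, suppose H + σrI is positive definite, and let s = −(H + σrI)⁻¹g satisfy ‖s‖ ≤ C_up r. Then for every d ∈ ℝⁿ with ‖d‖ = 1 one has dᵀ∇²f(x+s)d ≥ −(L₂C_up + σ_max)r; equivalently, the smallest eigenvalue of ∇²f(x+s) is at least −(L₂C_up + σ_max)r. -/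
open RealInnerProductSpace

/-- Curvature bound after a regularized Newton step: if `H + σrI` is positive definite,
`s = -(H + σrI)⁻¹g` satisfies `‖s‖ ≤ C_up r`, and `0 < σ ≤ σ_max`, then for every unit
vector `d` one has `dᵀ∇²f(x+s)d ≥ -(L₂C_up + σ_max)r`. -/
theorem hessian_curvature_bound_regularized_newton
    (n : ℕ) (f : EuclideanSpace ℝ (Fin n) → ℝ) (L₂ : ℝ) (hL₂ : 0 < L₂)
    (hf : ContDiff ℝ 2 f)
    (hLip : ∀ y z : EuclideanSpace ℝ (Fin n),
      ‖fderiv ℝ (gradient f) y - fderiv ℝ (gradient f) z‖ ≤ L₂ * ‖y - z‖)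
    (x : EuclideanSpace ℝ (Fin n))
    (σ σ_max r C_up : ℝ) (hσ : 0 < σ) (hσmax : σ ≤ σ_max) (hr : 0 < r) (hC : 0 < C_up)
    (hpd : ∀ v : EuclideanSpace ℝ (Fin n), v ≠ 0 →
      0 < ⟪v, fderiv ℝ (gradient f) x v + (σ * r) • v⟫)
    (s : EuclideanSpace ℝ (Fin n))
    (hs : fderiv ℝ (gradient f) x s + (σ * r) • s = -gradient f x)
    (hnorm : ‖s‖ ≤ C_up * r) :
    ∀ d : EuclideanSpace ℝ (Fin n), ‖d‖ = 1 →
      ⟪d, fderiv ℝ (gradient f) (x + s) d⟫ ≥ -((L₂ * C_up + σ_max) * r) := by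

  intro d hd
  have hd0 : d ≠ 0 := by
    intro h; rw [h, norm_zero] at hd; norm_num at hd
  have h1 := hpd d hd0
  rw [inner_add_right, real_inner_smul_right, real_inner_self_eq_norm_sq, hd] at h1
  have hL := hLip (x + s) x
  have hxs : x + s - x = s := by abel
  rw [hxs] at hL
  set A := fderiv ℝ (gradient f) (x + s)
  set B := fderiv ℝ (gradient f) x
  have h3 : |⟪d, (A - B) d⟫| ≤ L₂ * ‖s‖ := by
    calc |⟪d, (A - B) d⟫| ≤ ‖d‖ * ‖(A - B) d‖ := abs_real_inner_le_norm _ _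
      _ ≤ ‖d‖ * (‖A - B‖ * ‖d‖) := by
          gcongr; exact (A - B).le_opNorm d
      _ = ‖A - B‖ := by rw [hd]; ring
      _ ≤ L₂ * ‖s‖ := hL
  have h4 : ⟪d, (A - B) d⟫ = ⟪d, A d⟫ - ⟪d, B d⟫ := by
    rw [ContinuousLinearMap.sub_apply, inner_sub_right]
  rw [h4] at h3
  have h5 : L₂ * ‖s‖ ≤ L₂ * (C_up * r) := by gcongr
  have h6 := abs_le.mp h3
  nlinarith [h6.1, h6.2]
end

section
/- Let f : ℝⁿ → ℝ be twice continuously differentiable with L₂-Lipschitz Hessian, let x ∈ ℝⁿ, g = ∇f(x), H = ∇²f(x), and for σ > 0 let m(s) = f(x) + gᵀs + (1/2)sᵀHs + (σ/3)‖s‖³, whose Hessian at s ≠ 0 is ∇²m(s) = H + σ‖s‖I + σ(ssᵀ)/‖s‖. Let θ₂ > 0 and let s ∈ ℝⁿ, s ≠ 0, be such that dᵀ∇²m(s)d ≥ −θ₂‖s‖ for every unit vector d ∈ ℝⁿ (i.e. the smallest eigenvalue of ∇²m(s) is at least −θ₂‖s‖). Then dᵀ∇²f(x+s)d ≥ −(L₂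 + θ₂ + 2σ)‖s‖ for every unit vector d ∈ ℝⁿ; equivalently, the smallest eigenvalue of ∇²f(x+s) is at least −(L₂ + θ₂ + 2σ)‖s‖. -/
open RealInnerProductSpace

/-- Curvature bound after an approximate cubic-model minimization step: if `s ≠ 0` and
the Hessian of the cubic model `∇²m(s) = H + σ‖s‖I + σssᵀ/‖s‖` satisfies
`dᵀ∇²m(s)d ≥ -θ₂‖s‖` for every unit vector `d`, then for every unit vector `d`
one has `dᵀ∇²f(x+s)d ≥ -(L₂ + θ₂ + 2σ)‖s‖`. -/
theorem hessian_curvature_bound_cubic_model_step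
    (n : ℕ) (f : EuclideanSpace ℝ (Fin n) → ℝ) (L₂ : ℝ) (hL₂ : 0 < L₂)
    (hf : ContDiff ℝ 2 f)
    (hLip : ∀ y z : EuclideanSpace ℝ (Fin n),
      ‖fderiv ℝ (gradient f) y - fderiv ℝ (gradient f) z‖ ≤ L₂ * ‖y - z‖)
    (x : EuclideanSpace ℝ (Fin n))
    (σ θ₂ : ℝ) (hσ : 0 < σ) (hθ₂ : 0 < θ₂)
    (s : EuclideanSpace ℝ (Fin n)) (hs : s ≠ 0)
    (hcurvm : ∀ d : EuclideanSpace ℝ (Fin n), ‖d‖ = 1 →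
      ⟪d, fderiv ℝ (gradient f) x d⟫ + σ * ‖s‖ * ‖d‖ ^ 2 + σ * ⟪s, d⟫ ^ 2 / ‖s‖ ≥
        -(θ₂ * ‖s‖)) :
    ∀ d : EuclideanSpace ℝ (Fin n), ‖d‖ = 1 →
      ⟪d, fderiv ℝ (gradient f) (x + s) d⟫ ≥ -((L₂ + θ₂ + 2 * σ) * ‖s‖) := by
  intro d hd
  set A := fderiv ℝ (gradient f) (x + s)
  set B := fderiv ℝ (gradient f) x
  have hns : 0 < ‖s‖ := norm_pos_iff.mpr hs
  -- Lipschitz bound on the Hessian difference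
  have hop : ‖A - B‖ ≤ L₂ * ‖s‖ := by
    have h0 : x + s - x = s := by abel
    have := hLip (x + s) x
    rwa [h0] at this
  have hABd : |⟪d, A d - B d⟫| ≤ L₂ * ‖s‖ := by
    have h1 : |⟪d, A d - B d⟫| ≤ ‖d‖ * ‖A d - B d‖ := abs_real_inner_le_norm _ _
    have h2 : ‖A d - B d‖ ≤ ‖A - B‖ * ‖d‖ := (A - B).le_opNorm d
    calc |⟪d, A d - B d⟫| ≤ ‖d‖ * ‖A d - B d‖ := h1
      _ = ‖A d - B d‖ := by rw [hd, one_mul]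
      _ ≤ ‖A - B‖ * ‖d‖ := h2
      _ = ‖A - B‖ := by rw [hd, mul_one]
      _ ≤ L₂ * ‖s‖ := hop
  -- bound on inner products with B
  have hsd : ⟪s, d⟫ ^ 2 ≤ ‖s‖ ^ 2 := by
    have h := abs_real_inner_le_norm s d
    have : |⟪s, d⟫| ≤ ‖s‖ := by simpa [hd] using h
    calc ⟪s, d⟫ ^ 2 = |⟪s, d⟫| ^ 2 := (sq_abs _).symm
      _ ≤ ‖s‖ ^ 2 := pow_le_pow_left₀ (abs_nonneg _) this 2
  have hdiv : σ * ⟪s, d⟫ ^ 2 / ‖s‖ ≤ σ * ‖s‖ := by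
    rw [div_le_iff₀ hns]
    nlinarith [sq_nonneg ‖s‖]
  have hBd : ⟪d, B d⟫ ≥ -(θ₂ * ‖s‖) - 2 * σ * ‖s‖ := by
    have h := hcurvm d hd
    rw [hd] at h
    nlinarith
  have hinner : ⟪d, A d⟫ = ⟪d, B d⟫ + ⟪d, A d - B d⟫ := by
    rw [inner_sub_right]; ring
  have := neg_abs_le ⟪d, A d - B d⟫
  rw [hinner]
  nlinarith [abs_nonneg ⟪d, A d - B d⟫]
end

section
/- Let f : ℝⁿ → ℝ be twice continuously differentiable with L₂-Lipschitz Hessian, let x ∈ ℝⁿ, g = ∇f(x), H = ∇²f(x), and T(s) = f(x) + gᵀs + (1/2)sᵀHs. Let 0 < σ_min ≤ σ ≤ σ_max, r > 0, 0 < C_low ≤ C_up, η₁ ∈ (0,1). Suppose H + σrI is positive definite, s = −(H + σrI)⁻¹g with s ≠ 0, C_low r ≤ ‖s‖ ≤ C_up r, and the acceptance condition f(x) − f(x+s) ≥ η₁(T(0) − T(s)) holds. Then, denoting by λ_min(∇²f(x+s)) the smallest eigenvalue of the Hessian at x+s, f(x) − f(x+s) ≥ (η₁/2) σ_min C_low²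 ((−λ_min(∇²f(x+s)))/(L₂C_up + σ_max))³. -/
open RealInnerProductSpace

private lemma cube_le_cube_aux {a r : ℝ} (h : a ≤ r) : a ^ 3 ≤ r ^ 3 := by
  nlinarith [sq_nonneg (a + r), sq_nonneg a, sq_nonneg r]

set_option maxHeartbeats 1000000 in
/-- Second-order decrease on a successful regularized Newton iteration: if `H + σrI` is
positive definite, `s = -(H + σrI)⁻¹g ≠ 0`, `C_low r ≤ ‖s‖ ≤ C_up r`, and
`f(x) - f(x+s) ≥ η₁(T(0) - T(s))`, then
`f(x) - f(x+s) ≥ (η₁/2)σ_min C_low² ((-λ_min(∇²f(x+s)))/(L₂C_up + σ_max))³`,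
where `λ_min(∇²f(x+s))` is the smallest eigenvalue of the Hessian at `x + s`,
i.e. the infimum of its Rayleigh quotient over the unit sphere. -/
theorem second_order_decrease_regularized_newton
    (n : ℕ) (f : EuclideanSpace ℝ (Fin n) → ℝ) (L₂ : ℝ) (hL₂ : 0 < L₂)
    (hf : ContDiff ℝ 2 f)
    (hLip : ∀ y z : EuclideanSpace ℝ (Fin n),
      ‖fderiv ℝ (gradient f) y - fderiv ℝ (gradient f) z‖ ≤ L₂ * ‖y - z‖)
    (x : EuclideanSpace ℝ (Fin n))
    (T : EuclideanSpace ℝ (Fin n) → ℝ)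
    (hT : ∀ s : EuclideanSpace ℝ (Fin n),
      T s = f x + ⟪gradient f x, s⟫ + (1 / 2) * ⟪s, fderiv ℝ (gradient f) x s⟫)
    (σ σ_min σ_max r C_low C_up η₁ : ℝ)
    (hσmin : 0 < σ_min) (hσlo : σ_min ≤ σ) (hσhi : σ ≤ σ_max)
    (hr : 0 < r) (hClow : 0 < C_low) (hCle : C_low ≤ C_up)
    (hη₁ : η₁ ∈ Set.Ioo (0 : ℝ) 1)
    (hpd : ∀ v : EuclideanSpace ℝ (Fin n), v ≠ 0 →
      0 < ⟪v, fderiv ℝ (gradient f) x v + (σ * r) • v⟫)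
    (s : EuclideanSpace ℝ (Fin n)) (hsne : s ≠ 0)
    (hs : fderiv ℝ (gradient f) x s + (σ * r) • s = -gradient f x)
    (hlow : C_low * r ≤ ‖s‖) (hup : ‖s‖ ≤ C_up * r)
    (hacc : f x - f (x + s) ≥ η₁ * (T 0 - T s)) :
    f x - f (x + s) ≥ (η₁ / 2) * σ_min * C_low ^ 2 *
      ((-sInf ((fun d : EuclideanSpace ℝ (Fin n) =>
          ⟪d, fderiv ℝ (gradient f) (x + s) d⟫) '' {d | ‖d‖ = 1})) /
        (L₂ * C_up + σ_max)) ^ 3 := by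
  obtain ⟨hη0, hη1⟩ := hη₁
  have hσ : (0:ℝ) < σ := lt_of_lt_of_le hσmin hσlo
  have hCup : (0:ℝ) < C_up := lt_of_lt_of_le hClow hCle
  have hσmax : (0:ℝ) < σ_max := lt_of_lt_of_le hσ hσhi
  have hden : (0:ℝ) < L₂ * C_up + σ_max := by positivity
  set H := fderiv ℝ (gradient f) x with hH
  set H' := fderiv ℝ (gradient f) (x + s) with hH'
  set S := ((fun d : EuclideanSpace ℝ (Fin n) => ⟪d, H' d⟫) '' {d | ‖d‖ = 1}) with hS
  have hg : gradient f x = -(H s + (σ * r) • s) := by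
    rw [hs, neg_neg]
  -- model decrease
  have hpds : 0 < ⟪s, H s⟫ + (σ * r) * ‖s‖ ^ 2 := by
    have := hpd s hsne
    rwa [inner_add_right, real_inner_smul_right, real_inner_self_eq_norm_sq] at this
  have hmodel : T 0 - T s = (1/2) * ⟪s, H s⟫ + (σ * r) * ‖s‖ ^ 2 := by
    rw [hT 0, hT s]
    simp only [hg, inner_neg_left, inner_add_left, real_inner_smul_left,
      real_inner_self_eq_norm_sq, inner_zero_right, map_zero, inner_zero_left]
    have hcomm : ⟪H s, s⟫ = ⟪s, H s⟫ := real_inner_comm _ _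
    rw [hcomm]; ring
  have hTdec : T 0 - T s ≥ (σ * r / 2) * ‖s‖ ^ 2 := by
    rw [hmodel]; linarith
  have hns : C_low * r ≤ ‖s‖ := hlow
  have hdec : f x - f (x + s) ≥ (η₁ / 2) * σ_min * C_low ^ 2 * r ^ 3 := by
    have h1 : η₁ * ((σ * r / 2) * ‖s‖ ^ 2) ≤ η₁ * (T 0 - T s) :=
      mul_le_mul_of_nonneg_left hTdec (le_of_lt hη0)
    have h2 : (C_low * r) ^ 2 ≤ ‖s‖ ^ 2 := by
      have h0 : (0:ℝ) ≤ C_low * r := by positivity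
      exact pow_le_pow_left₀ h0 hns 2
    have h3 : (σ_min * r / 2) * ((C_low * r) ^ 2) ≤ (σ * r / 2) * ‖s‖ ^ 2 := by
      have ha1 : σ_min * r / 2 ≤ σ * r / 2 := by nlinarith
      exact mul_le_mul ha1 h2 (by positivity) (by positivity)
    have h4 : η₁ * ((σ_min * r / 2) * ((C_low * r) ^ 2)) ≤ η₁ * ((σ * r / 2) * ‖s‖ ^ 2) :=
      mul_le_mul_of_nonneg_left h3 (le_of_lt hη0)
    have h5 : η₁ * ((σ_min * r / 2) * ((C_low * r) ^ 2)) = (η₁ / 2) * σ_min * C_low ^ 2 * r ^ 3 := by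
      ring
    linarith
  -- eigenvalue bound
  have hne : S.Nonempty := by
    have hsn : ‖s‖ ≠ 0 := norm_ne_zero_iff.mpr hsne
    have hd : ‖(‖s‖⁻¹ • s : EuclideanSpace ℝ (Fin n))‖ = 1 := by
      rw [norm_smul, norm_inv, norm_norm, inv_mul_cancel₀ hsn]
    exact ⟨_, Set.mem_image_of_mem _ hd⟩
  have hbound : ∀ y ∈ S, -(σ * r + L₂ * ‖s‖) ≤ y := by
    rintro y ⟨d, hd, rfl⟩
    have hd1 : ‖d‖ = 1 := hd
    have hdne : d ≠ 0 := by
      intro h; rw [h, norm_zero] at hd1; norm_num at hd1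
    have hpdd : -(σ * r) < ⟪d, H d⟫ := by
      have := hpd d hdne
      rw [inner_add_right, real_inner_smul_right, real_inner_self_eq_norm_sq, hd1] at this
      linarith
    have hop : ‖H' - H‖ ≤ L₂ * ‖s‖ := by
      have h := hLip (x + s) x
      rw [add_sub_cancel_left] at h
      exact h
    have hdiff : |⟪d, (H' - H) d⟫| ≤ L₂ * ‖s‖ := by
      calc |⟪d, (H' - H) d⟫| ≤ ‖d‖ * ‖(H' - H) d‖ := abs_real_inner_le_norm _ _
        _ ≤ ‖d‖ * (‖H' - H‖ * ‖d‖) := by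
            exact mul_le_mul_of_nonneg_left (ContinuousLinearMap.le_opNorm _ _) (norm_nonneg _)
        _ = ‖H' - H‖ := by rw [hd1]; ring
        _ ≤ L₂ * ‖s‖ := hop
    have hsplit : ⟪d, H' d⟫ = ⟪d, H d⟫ + ⟪d, (H' - H) d⟫ := by
      rw [ContinuousLinearMap.sub_apply, inner_sub_right]; ring
    have hab := abs_le.mp hdiff
    show -(σ * r + L₂ * ‖s‖) ≤ ⟪d, H' d⟫
    rw [hsplit]; linarith [hab.1]
  have hInf : -(σ * r + L₂ * ‖s‖) ≤ sInf S := le_csInf hne hbound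
  have hlamle : -sInf S ≤ (L₂ * C_up + σ_max) * r := by
    have h1 : -sInf S ≤ σ * r + L₂ * ‖s‖ := by linarith
    have h2 : L₂ * ‖s‖ ≤ L₂ * (C_up * r) :=
      mul_le_mul_of_nonneg_left hup (le_of_lt hL₂)
    have h3 : σ * r ≤ σ_max * r := mul_le_mul_of_nonneg_right hσhi (le_of_lt hr)
    linarith
  set a : ℝ := (-sInf S) / (L₂ * C_up + σ_max) with ha
  have har : a ≤ r := by
    rw [ha, div_le_iff₀ hden]; exact hlamle.trans_eq (mul_comm _ _)
  have hcube : a ^ 3 ≤ r ^ 3 := cube_le_cube_aux har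
  have hfinal : (η₁ / 2) * σ_min * C_low ^ 2 * a ^ 3 ≤ (η₁ / 2) * σ_min * C_low ^ 2 * r ^ 3 := by
    have hc : (0:ℝ) ≤ (η₁ / 2) * σ_min * C_low ^ 2 := by positivity
    exact mul_le_mul_of_nonneg_left hcube hc
  exact le_trans hfinal hdec
end

section
/- Let f : ℝⁿ → ℝ be twice continuously differentiable with L₂-Lipschitz Hessian, let x ∈ ℝⁿ, g = ∇f(x), H = ∇²f(x), T(s) = f(x) + gᵀs + (1/2)sᵀHs, and for σ > 0 let m(s) = T(s) + (σ/3)‖s‖³, whose Hessian at s ≠ 0 is ∇²m(s) = H + σ‖s‖I + σ(ssᵀ)/‖s‖. Let 0 < σ_min ≤ σ ≤ σ_max, θ₂ > 0, η₁ ∈ (0,1). Suppose s ∈ ℝⁿ, s ≠ 0, satisfies m(s) < m(0), the smallest eigenvalue of ∇²m(s) is at least −θ₂‖s‖, and the acceptance condition f(x) − f(x+s) ≥ η₁(T(0) − T(s)) holds. Then, denoting by λ_min(∇²f(x+s)) the smallest eigenvalue of the Hessian at x+s, f(x) − f(x+s) ≥ (η₁/3) σ_min ((−λ_min(∇²f(x+s)))/(L₂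 + θ₂ + 2σ_max))³. -/
open RealInnerProductSpace

set_option maxHeartbeats 1000000 in
/-- Second-order decrease on a successful cubic-model iteration: if `s ≠ 0` satisfies
`m(s) < m(0)`, the smallest eigenvalue of `∇²m(s) = H + σ‖s‖I + σssᵀ/‖s‖` is at least
`-θ₂‖s‖` (i.e. `dᵀ∇²m(s)d ≥ -θ₂‖s‖` for every unit vector `d`), and
`f(x) - f(x+s) ≥ η₁(T(0) - T(s))`, then
`f(x) - f(x+s) ≥ (η₁/3)σ_min ((-λ_min(∇²f(x+s)))/(L₂ + θ₂ + 2σ_max))³`,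
where `λ_min(∇²f(x+s))` is the smallest eigenvalue of the Hessian at `x + s`,
i.e. the infimum of its Rayleigh quotient over the unit sphere. -/
theorem second_order_decrease_cubic_model_step
    (n : ℕ) (f : EuclideanSpace ℝ (Fin n) → ℝ) (L₂ : ℝ) (hL₂ : 0 < L₂)
    (hf : ContDiff ℝ 2 f)
    (hLip : ∀ y z : EuclideanSpace ℝ (Fin n),
      ‖fderiv ℝ (gradient f) y - fderiv ℝ (gradient f) z‖ ≤ L₂ * ‖y - z‖)
    (x : EuclideanSpace ℝ (Fin n))
    (T m : EuclideanSpace ℝ (Fin n) → ℝ)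
    (hT : ∀ s : EuclideanSpace ℝ (Fin n),
      T s = f x + ⟪gradient f x, s⟫ + (1 / 2) * ⟪s, fderiv ℝ (gradient f) x s⟫)
    (σ σ_min σ_max θ₂ η₁ : ℝ)
    (hσmin : 0 < σ_min) (hσlo : σ_min ≤ σ) (hσhi : σ ≤ σ_max)
    (hθ₂ : 0 < θ₂) (hη₁ : η₁ ∈ Set.Ioo (0 : ℝ) 1)
    (hm : ∀ s : EuclideanSpace ℝ (Fin n), m s = T s + (σ / 3) * ‖s‖ ^ 3)
    (s : EuclideanSpace ℝ (Fin n)) (hsne : s ≠ 0)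
    (hdec : m s < m 0)
    (hcurvm : ∀ d : EuclideanSpace ℝ (Fin n), ‖d‖ = 1 →
      ⟪d, fderiv ℝ (gradient f) x d⟫ + σ * ‖s‖ * ‖d‖ ^ 2 + σ * ⟪s, d⟫ ^ 2 / ‖s‖ ≥
        -(θ₂ * ‖s‖))
    (hacc : f x - f (x + s) ≥ η₁ * (T 0 - T s)) :
    f x - f (x + s) ≥ (η₁ / 3) * σ_min *
      ((-sInf ((fun d : EuclideanSpace ℝ (Fin n) =>
          ⟪d, fderiv ℝ (gradient f) (x + s) d⟫) '' {d | ‖d‖ = 1})) /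
        (L₂ + θ₂ + 2 * σ_max)) ^ 3 := by
  obtain ⟨hη₁0, hη₁1⟩ := hη₁
  have hσ0 : 0 < σ := lt_of_lt_of_le hσmin hσlo
  have hσmax : 0 < σ_max := lt_of_lt_of_le hσ0 hσhi
  have hC0 : (0:ℝ) < L₂ + θ₂ + 2 * σ_max := by linarith
  have hs0 : (0:ℝ) < ‖s‖ := norm_pos_iff.mpr hsne
  -- Step 1: decrease bound
  have hT0 : T 0 = f x := by rw [hT]; simp
  have hm0 : m 0 = T 0 := by rw [hm]; simp
  have hTs : T 0 - T s ≥ σ / 3 * ‖s‖ ^ 3 := by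
    have h1 := hdec
    rw [hm s, hm0] at h1
    linarith
  have hstep : f x - f (x + s) ≥ η₁ / 3 * σ_min * ‖s‖ ^ 3 := by
    have h2 : η₁ * (T 0 - T s) ≥ η₁ * (σ / 3 * ‖s‖ ^ 3) := by
      apply mul_le_mul_of_nonneg_left hTs (le_of_lt hη₁0)
    have h3 : η₁ * (σ / 3 * ‖s‖ ^ 3) ≥ η₁ / 3 * σ_min * ‖s‖ ^ 3 := by
      have h4 : σ_min * ‖s‖ ^ 3 ≤ σ * ‖s‖ ^ 3 :=
        mul_le_mul_of_nonneg_right hσlo (by positivity)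
      have h5 := mul_le_mul_of_nonneg_left h4 (by positivity : (0:ℝ) ≤ η₁ / 3)
      nlinarith [h5]
    linarith
  -- Step 2: eigenvalue bound
  set A := fderiv ℝ (gradient f) with hA
  have key : ∀ d : EuclideanSpace ℝ (Fin n), ‖d‖ = 1 →
      ⟪d, A (x + s) d⟫ ≥ -((L₂ + θ₂ + 2 * σ_max) * ‖s‖) := by
    intro d hd
    have hlip : ‖A (x + s) - A x‖ ≤ L₂ * ‖s‖ := by
      have h0 := hLip (x + s) x
      rw [add_sub_cancel_left] at h0
      exact h0
    have hdiff : |⟪d, A (x + s) d - A x d⟫| ≤ L₂ * ‖s‖ := by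
      have h1 : |⟪d, A (x + s) d - A x d⟫| ≤ ‖d‖ * ‖A (x + s) d - A x d‖ :=
        abs_real_inner_le_norm _ _
      have h2 : ‖A (x + s) d - A x d‖ ≤ ‖A (x + s) - A x‖ * ‖d‖ := by
        rw [← ContinuousLinearMap.sub_apply]
        exact ContinuousLinearMap.le_opNorm _ _
      rw [hd, one_mul] at h1
      rw [hd, mul_one] at h2
      calc |⟪d, A (x + s) d - A x d⟫| ≤ ‖A (x + s) d - A x d‖ := h1
        _ ≤ ‖A (x + s) - A x‖ := h2
        _ ≤ L₂ * ‖s‖ := hlip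
    have hsplit : ⟪d, A (x + s) d⟫ = ⟪d, A x d⟫ + ⟪d, A (x + s) d - A x d⟫ := by
      rw [inner_sub_right]; ring
    have hcurv := hcurvm d hd
    have hsd : ⟪s, d⟫ ^ 2 ≤ ‖s‖ ^ 2 := by
      have h1 : |⟪s, d⟫| ≤ ‖s‖ * ‖d‖ := abs_real_inner_le_norm _ _
      rw [hd, mul_one] at h1
      nlinarith [abs_nonneg ⟪s, d⟫, sq_abs ⟪s, d⟫]
    have hsd2 : σ * ⟪s, d⟫ ^ 2 / ‖s‖ ≤ σ * ‖s‖ := by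
      rw [div_le_iff₀ hs0]
      nlinarith
    have habs := abs_le.mp hdiff
    rw [hd] at hcurv
    have hσs : σ * ‖s‖ ≤ σ_max * ‖s‖ :=
      mul_le_mul_of_nonneg_right hσhi (le_of_lt hs0)
    rw [hsplit]
    nlinarith [hcurv, hsd2, habs.1]
  set S := (fun d : EuclideanSpace ℝ (Fin n) => ⟪d, A (x + s) d⟫) '' {d | ‖d‖ = 1}
    with hS
  have hne : S.Nonempty := by
    refine ⟨_, ⟨(‖s‖)⁻¹ • s, ?_, rfl⟩⟩
    simp [norm_smul, abs_of_pos (inv_pos.mpr hs0), inv_mul_cancel₀ (ne_of_gt hs0)]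
  have hlam : sInf S ≥ -((L₂ + θ₂ + 2 * σ_max) * ‖s‖) := by
    apply le_csInf hne
    rintro y ⟨d, hd, rfl⟩
    exact key d hd
  have hle : (-sInf S) / (L₂ + θ₂ + 2 * σ_max) ≤ ‖s‖ := by
    rw [div_le_iff₀ hC0]
    nlinarith
  have hcube : ((-sInf S) / (L₂ + θ₂ + 2 * σ_max)) ^ 3 ≤ ‖s‖ ^ 3 :=
    (Odd.strictMono_pow (⟨1, by norm_num⟩ : Odd 3)).monotone hle
  have hmul : η₁ / 3 * σ_min * ((-sInf S) / (L₂ + θ₂ + 2 * σ_max)) ^ 3 ≤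
      η₁ / 3 * σ_min * ‖s‖ ^ 3 := by
    apply mul_le_mul_of_nonneg_left hcube
    positivity
  linarith
end
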